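/- arXiv:1708.08950 — 2 statements merged into one kernel-verified Lean document; each statement's English description precedes it below -/
import Mathlib

section
/- Let R be a commutative ring, M an R-module, and U, V, U', V' : M → M R-linear endomorphisms such that U∘V = id, U'∘V' = id, and each of U, V commutes with each of U', V'. Let q, a, α₀, α₁ ∈ R with α₀+α₁ = a, α₀α₁ = q, and q', a', α₀', α₁' ∈ R with α₀'+α₁' = a', α₀'α₁' = q'. Suppose f ∈ M satisfies (U + q·V) f = a·f and (U' + q'·V') f = a'·f. Then for each i, i' ∈ {0,1}, the element f_{ii'} := (id - α_{1-i'}'·V')((id - α_{1-i}·V) f) satisfies (U∘U') f_{ii'} = α_i·α_{i'}'·f_{ii'}. -/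
/-- Single stabilization: pointwise version. -/
lemma stab_aux {R M : Type*} [CommRing R] [AddCommGroup M] [Module R M]
    (U V : M →ₗ[R] M) (hUV : ∀ x, U (V x) = x)
    (q a α β : R) (hs : α + β = a) (hp : α * β = q)
    (f : M) (hf : U f + q • V f = a • f) :
    U (f - β • V f) = α • (f - β • V f) := by
  have hU : U f = a • f - q • V f := eq_sub_of_add_eq hf
  have h1 : U (f - β • V f) = U f - β • U (V f) := by
    rw [map_sub, map_smul]
  rw [h1, hU, hUV, ← hs, ← hp]
  module

/-- One case of the double stabilization. -/
lemma double_case {R M : Type*} [CommRing R] [AddCommGroup M] [Module R M]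
    (U V U' V' : M →ₗ[R] M)
    (hUV : ∀ x, U (V x) = x) (hUV' : ∀ x, U' (V' x) = x)
    (hUU' : ∀ x, U (U' x) = U' (U x)) (hUV'c : ∀ x, U (V' x) = V' (U x))
    (hVU' : ∀ x, V (U' x) = U' (V x)) (hVV' : ∀ x, V (V' x) = V' (V x))
    (q a α β : R) (hs : α + β = a) (hp : α * β = q)
    (q' a' α' β' : R) (hs' : α' + β' = a') (hp' : α' * β' = q')
    (f : M) (hf : U f + q • V f = a • f) (hf' : U' f + q' • V' f = a' • f) :
    U (U' ((f - β • V f) - β' • V' (f - β • V f)))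
      = (α * α') • ((f - β • V f) - β' • V' (f - β • V f)) := by
  obtain ⟨g, hg_def⟩ : ∃ g, g = f - β • V f := ⟨_, rfl⟩
  rw [← hg_def]
  have hg : U g = α • g := by
    rw [hg_def]; exact stab_aux U V hUV q a α β hs hp f hf
  have hg' : U' g + q' • V' g = a' • g := by
    have h1 : U' g = U' f - β • V (U' f) := by
      rw [hg_def, map_sub, map_smul, hVU']
    have h2 : V' g = V' f - β • V (V' f) := by
      rw [hg_def, map_sub, map_smul, hVV']
    have hf'' : U' f = a' • f - q' • V' f := eq_sub_of_add_eq hf'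
    rw [h1, h2, hg_def, hf'', map_sub, map_smul, map_smul]
    module
  obtain ⟨h, hh_def⟩ : ∃ h, h = g - β' • V' g := ⟨_, rfl⟩
  rw [← hh_def]
  have hh' : U' h = α' • h := by
    rw [hh_def]; exact stab_aux U' V' hUV' q' a' α' β' hs' hp' g hg'
  have hUh : U h = α • h := by
    rw [hh_def, map_sub, map_smul, hUV'c, hg, map_smul, smul_sub, smul_comm]
  rw [hUU', hUh, map_smul, hh', smul_smul]

/-- The four `(π,π')`-stabilizations `f_{ii'} = (1 - α_{1-i'}'·V')((1 - α_{1-i}·V) f)`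
of a Hilbert–Hecke eigenform are eigenvectors of `U∘U'` with eigenvalues `αᵢ·α'_{i'}`. -/
theorem double_stabilization_eigenvector {R M : Type*} [CommRing R] [AddCommGroup M]
    [Module R M] (U V U' V' : M →ₗ[R] M)
    (hUV : U ∘ₗ V = LinearMap.id) (hUV' : U' ∘ₗ V' = LinearMap.id)
    (hUU' : U ∘ₗ U' = U' ∘ₗ U) (hUV'c : U ∘ₗ V' = V' ∘ₗ U)
    (hVU' : V ∘ₗ U' = U' ∘ₗ V) (hVV' : V ∘ₗ V' = V' ∘ₗ V)
    (q a α₀ α₁ : R) (hsum : α₀ + α₁ = a) (hprod : α₀ * α₁ = q)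
    (q' a' α₀' α₁' : R) (hsum' : α₀' + α₁' = a') (hprod' : α₀' * α₁' = q')
    (f : M) (hf : U f + q • V f = a • f) (hf' : U' f + q' • V' f = a' • f) :
    U (U' ((f - α₁ • V f) - α₁' • V' (f - α₁ • V f)))
      = (α₀ * α₀') • ((f - α₁ • V f) - α₁' • V' (f - α₁ • V f)) ∧
    U (U' ((f - α₁ • V f) - α₀' • V' (f - α₁ • V f)))
      = (α₀ * α₁') • ((f - α₁ • V f) - α₀' • V' (f - α₁ • V f)) ∧
    U (U' ((f - α₀ • V f) - α₁' • V' (f - α₀ • V f)))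
      = (α₁ * α₀') • ((f - α₀ • V f) - α₁' • V' (f - α₀ • V f)) ∧
    U (U' ((f - α₀ • V f) - α₀' • V' (f - α₀ • V f)))
      = (α₁ * α₁') • ((f - α₀ • V f) - α₀' • V' (f - α₀ • V f)) := by
  have hUVx : ∀ x, U (V x) = x := fun x => by
    simpa using LinearMap.congr_fun hUV x
  have hUV'x : ∀ x, U' (V' x) = x := fun x => by
    simpa using LinearMap.congr_fun hUV' x
  have hUU'x : ∀ x, U (U' x) = U' (U x) := fun x => by
    simpa using LinearMap.congr_fun hUU' x
  have hUV'cx : ∀ x, U (V' x) = V' (U x) := fun x => by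
    simpa using LinearMap.congr_fun hUV'c x
  have hVU'x : ∀ x, V (U' x) = U' (V x) := fun x => by
    simpa using LinearMap.congr_fun hVU' x
  have hVV'x : ∀ x, V (V' x) = V' (V x) := fun x => by
    simpa using LinearMap.congr_fun hVV' x
  refine ⟨?_, ?_, ?_, ?_⟩
  · exact double_case U V U' V' hUVx hUV'x hUU'x hUV'cx hVU'x hVV'x
      q a α₀ α₁ hsum hprod q' a' α₀' α₁' hsum' hprod' f hf hf'
  · exact double_case U V U' V' hUVx hUV'x hUU'x hUV'cx hVU'x hVV'x
      q a α₀ α₁ hsum hprod q' a' α₁' α₀' (by linear_combination hsum')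
      (by linear_combination hprod') f hf hf'
  · exact double_case U V U' V' hUVx hUV'x hUU'x hUV'cx hVU'x hVV'x
      q a α₁ α₀ (by linear_combination hsum) (by linear_combination hprod)
      q' a' α₀' α₁' hsum' hprod' f hf hf'
  · exact double_case U V U' V' hUVx hUV'x hUU'x hUV'cx hVU'x hVV'x
      q a α₁ α₀ (by linear_combination hsum) (by linear_combination hprod)
      q' a' α₁' α₀' (by linear_combination hsum') (by linear_combination hprod') f hf hf'
end

section
/- Let K, O, σ, p, 𝔭, 𝔭' be as follows: K a quadratic field with ring of integers O and nontrivial automorphism σ, p an odd rational prime with pO = 𝔭𝔭', 𝔭 ≠ 𝔭' prime ideals, 𝔭' = σ(𝔭). Let R be a commutative ring and g : O → R a finitely supported function such that g(ν) ≠ 0 implies ν ∈ 𝔭' and ν ∉ pO. Define g⌊ : ℤ → R by g⌊(n) = Σ_{Tr(ν)=n} g(ν), and (U_p h)(n) = h(pn) for h : ℤ → R. Then U_p(g⌊) = 0. -/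
open scoped BigOperators

/-- The shift operator `U_p` on `q`-expansions: `(U_p h)(n) = h(p·n)`. -/
def Uop {O R : Type*} [Mul O] (π : O) (f : O → R) : O → R :=
  fun ν => f (π * ν)

/-- Restriction of a Hilbert `q`-expansion to the modular curve:
`g⌊(n) = ∑_{Tr(ν) = n} g(ν)`. -/
noncomputable def restr {K : Type*} [Field K] [NumberField K] {R : Type*}
    [AddCommMonoid R] (g : NumberField.RingOfIntegers K → R) (n : ℤ) : R :=
  ∑ᶠ ν ∈ {ν : NumberField.RingOfIntegers K |
    Algebra.trace ℤ (NumberField.RingOfIntegers K) ν = n}, g ν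

/-- If `g` is supported on elements of `𝔭'` not divisible by `p`, then the
restricted `q`-expansion `g⌊` is killed by `U_p`. -/
theorem depleted_restriction_killed_by_Up (K : Type*) [Field K] [NumberField K]
    (hdeg : Module.finrank ℚ K = 2)
    (σ : NumberField.RingOfIntegers K ≃+* NumberField.RingOfIntegers K)
    (hinv : ∀ x, σ (σ x) = x)
    (hσtr : ∀ x : NumberField.RingOfIntegers K,
      ((Algebra.trace ℤ (NumberField.RingOfIntegers K) x : ℤ) :
        NumberField.RingOfIntegers K) = x + σ x)
    (p : ℕ) (hp : p.Prime) (hp2 : p ≠ 2)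
    (𝔭 𝔭' : Ideal (NumberField.RingOfIntegers K))
    (h𝔭 : 𝔭.IsPrime) (h𝔭' : 𝔭'.IsPrime) (hne : 𝔭 ≠ 𝔭')
    (hmap : 𝔭' = Ideal.map σ.toRingHom 𝔭)
    (hsplit : Ideal.span {(p : NumberField.RingOfIntegers K)} = 𝔭 * 𝔭')
    (R : Type*) [CommRing R]
    (g : NumberField.RingOfIntegers K → R) (hg : (Function.support g).Finite)
    (hsupp : ∀ ν, g ν ≠ 0 → ν ∈ 𝔭' ∧
      ν ∉ Ideal.span {(p : NumberField.RingOfIntegers K)}) :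
    ∀ n : ℤ, Uop (p : ℤ) (restr g) n = 0 := by
  intro n
  show restr g ((p : ℤ) * n) = 0
  apply finsum_mem_of_eqOn_zero
  intro ν hν
  show g ν = 0
  by_contra hgν
  obtain ⟨hν𝔭', hνp⟩ := hsupp ν hgν
  -- the trace of ν lies in pO
  have htr : (ν : NumberField.RingOfIntegers K) + σ ν ∈ Ideal.span {(p : NumberField.RingOfIntegers K)} := by
    rw [← hσtr ν, hν]
    exact Ideal.mem_span_singleton.mpr ⟨(n : NumberField.RingOfIntegers K), by push_cast; ring⟩
  -- span {p} ≤ 𝔭 and ≤ 𝔭'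
  have hle𝔭 : Ideal.span {(p : NumberField.RingOfIntegers K)} ≤ 𝔭 := hsplit ▸ Ideal.mul_le_left
  have hle𝔭' : Ideal.span {(p : NumberField.RingOfIntegers K)} ≤ 𝔭' := hsplit ▸ Ideal.mul_le_right
  -- hence σ ν ∈ 𝔭'
  have hσν : σ ν ∈ 𝔭' := by
    have := Ideal.sub_mem 𝔭' (hle𝔭' htr) hν𝔭'
    simpa using this
  -- hence ν ∈ 𝔭
  have hν𝔭 : ν ∈ 𝔭 := by
    rw [hmap] at hσν
    obtain ⟨x, hx, hxe⟩ :=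
      (Ideal.mem_map_iff_of_surjective σ.toRingHom σ.surjective).mp hσν
    rwa [σ.injective hxe] at hx
  -- 𝔭 and 𝔭' are distinct maximal ideals, so 𝔭 ⊓ 𝔭' = 𝔭 * 𝔭' = pO
  have hpne : (p : NumberField.RingOfIntegers K) ≠ 0 := by
    exact_mod_cast Nat.cast_ne_zero.mpr hp.ne_zero
  have hbot : 𝔭 ≠ ⊥ ∧ 𝔭' ≠ ⊥ := by
    constructor <;> intro h <;>
      [rw [h, Ideal.bot_mul] at hsplit; rw [h, Ideal.mul_bot] at hsplit] <;>
      exact hpne (Ideal.span_singleton_eq_bot.mp hsplit)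
  have hmax : 𝔭.IsMaximal := Ideal.IsPrime.isMaximal h𝔭 hbot.1
  have hmax' : 𝔭'.IsMaximal := Ideal.IsPrime.isMaximal h𝔭' hbot.2
  have hsup : 𝔭 ⊔ 𝔭' = ⊤ := hmax.coprime_of_ne hmax' hne
  have : ν ∈ Ideal.span {(p : NumberField.RingOfIntegers K)} := by
    rw [hsplit, Ideal.mul_eq_inf_of_coprime hsup]
    exact ⟨hν𝔭, hν𝔭'⟩
  exact hνp this
end
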